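/- There exists a constant C > 0 such that for all ν > 0, γ₀, γ₁ ∈ (0,1), γ₂ > 0, and 0 < t ≤ T with T = ν⁻¹γ₀²γ₁², with ỹ(t) the unique positive zero of h₁(t,·): (i) −∫_{|y|≤ỹ(t)} h₁(t,y) dy ≤ C·( −∫_ℝ h₁(t,y) dy ); (ii) −∫_{|y|≤ỹ(t)} h₁(t,y) dy ≥ (1 + 1/C)·∫_{|y|≥ỹ(t)} h₁(t,y) dy, where both sides of (ii) are positive; that is, the integral of the negative part of h₁ is comparable to the total integral and strictly dominates the integral of the positive part. -/

import Mathlib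

/-!
With `a = 4νt + γ₀²γ₁²` and `b = γ₀²γ₁²` one has `h₁(t,·) = γ₂γ₁³ (p_a - p_b)`, where
`p_s(y) = e^{-y²/s} / s^{3/2}` has total mass `√π / s`. So `∫ h₁ = -γ₂γ₁³ D` with
`D = √π (1/b - 1/a) > 0`, and the negative part of `h₁` is the positive part `P` plus `γ₂γ₁³ D`.
Since `p_a / p_b = exp ((1/b - 1/a) (y² - ỹ²))`, the sign changes exactly at `|y| = ỹ`.
From `1 - e^{-u} ≤ u` one gets `p_a - p_b ≤ (1/b - 1/a) y² e^{-y²/a} / b^{3/2}`, and with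
`y² e^{-y²/a} ≤ 2a e^{-y²/(2a)}` this integrates to at most `(2a/b)^{3/2} D`. For `t ≤ T` we have
`a ≤ 5b`, hence `P ≤ 64 γ₂γ₁³ D`, and `C = 65` works.
-/

open MeasureTheory Real Filter Set

noncomputable section

/-- The function `h₁(t,y) = γ₂·γ₁³·(4νt+γ₀²γ₁²)^{−3/2}·exp(−y²/(4νt+γ₀²γ₁²))
  − γ₂·γ₀^{−3}·exp(−y²/(γ₀²γ₁²))` from the proof of Proposition 2.4. -/
def h1fun (ν γ₀ γ₁ γ₂ : ℝ) (t y : ℝ) : ℝ :=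
  γ₂ * γ₁^3 / (Real.sqrt (4*ν*t + γ₀^2*γ₁^2))^3 * Real.exp (-y^2 / (4*ν*t + γ₀^2*γ₁^2))
    - γ₂ / γ₀^3 * Real.exp (-y^2 / (γ₀^2*γ₁^2))

/-- The unique positive zero `ỹ(t)` of `h₁(t,·)` (for `t > 0`). -/
def ytil (ν γ₀ γ₁ : ℝ) (t : ℝ) : ℝ :=
  Real.sqrt ((4*ν*t + γ₀^2*γ₁^2) * γ₀^2 * γ₁^2 / (4*ν*t)
    * Real.log ((Real.sqrt (4*ν*t + γ₀^2*γ₁^2))^3 / (γ₀^3 * γ₁^3)))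

def gaussProfile (s y : ℝ) : ℝ :=
  exp (-y ^ 2 / s) / √s ^ 3

def crossingRadius (a b : ℝ) : ℝ :=
  √(a * b / (a - b) * log (√a ^ 3 / √b ^ 3))

theorem exp_neg_sq_div_eq (s : ℝ) :
    (fun y : ℝ => exp (-y ^ 2 / s)) = fun y => exp (-s⁻¹ * y ^ 2) := by
  ext y
  ring_nf

theorem integrable_exp_neg_sq_div {s : ℝ} (hs : 0 < s) :
    Integrable fun y : ℝ => exp (-y ^ 2 / s) := by
  rw [exp_neg_sq_div_eq]
  exact integrable_exp_neg_mul_sq (inv_pos.mpr hs)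

theorem integral_exp_neg_sq_div (s : ℝ) :
    ∫ y : ℝ, exp (-y ^ 2 / s) = √π * √s := by
  rw [exp_neg_sq_div_eq, integral_gaussian, div_inv_eq_mul, sqrt_mul pi_nonneg]

theorem integrable_gaussProfile {s : ℝ} (hs : 0 < s) : Integrable (gaussProfile s) :=
  (integrable_exp_neg_sq_div hs).div_const _

theorem integral_gaussProfile {s : ℝ} (hs : 0 < s) : ∫ y, gaussProfile s y = √π / s := by
  have hs' : √s ^ 2 = s := sq_sqrt hs.le
  have : 0 < √s := sqrt_pos.mpr hs
  simp only [gaussProfile]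
  rw [integral_div, integral_exp_neg_sq_div]
  field_simp
  rw [hs']

theorem gaussProfile_pos {s : ℝ} (hs : 0 < s) (y : ℝ) : 0 < gaussProfile s y := by
  unfold gaussProfile
  have := sqrt_pos.mpr hs
  positivity

theorem integral_gaussProfile_sub {a b : ℝ} (ha : 0 < a) (hb : 0 < b) :
    ∫ y, (gaussProfile a y - gaussProfile b y) = -(√π * (1 / b - 1 / a)) := by
  rw [integral_sub (integrable_gaussProfile ha) (integrable_gaussProfile hb),
    integral_gaussProfile ha, integral_gaussProfile hb]
  ring

theorem crossingRadius_sq {a b : ℝ} (hb : 0 < b) (hab : b ≤ a) :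
    crossingRadius a b ^ 2 = a * b / (a - b) * log (√a ^ 3 / √b ^ 3) := by
  have hsb : 0 < √b := sqrt_pos.mpr hb
  have hL : 0 ≤ log (√a ^ 3 / √b ^ 3) := by
    refine log_nonneg ((one_le_div (by positivity)).mpr ?_)
    exact pow_le_pow_left₀ hsb.le (sqrt_le_sqrt hab) 3
  refine sq_sqrt (mul_nonneg (div_nonneg ?_ (sub_nonneg.mpr hab)) hL)
  nlinarith

theorem gaussProfile_eq_mul_exp {a b : ℝ} (hb : 0 < b) (hab : b < a) (y : ℝ) :
    gaussProfile a y = gaussProfile b y * exp ((1 / b - 1 / a) * (y ^ 2 - crossingRadius a b ^ 2)) := by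
  have ha : 0 < a := hb.trans hab
  have hsa : 0 < √a := sqrt_pos.mpr ha
  have hsb : 0 < √b := sqrt_pos.mpr hb
  have hexp : (1 / b - 1 / a) * (y ^ 2 - crossingRadius a b ^ 2)
      = (-y ^ 2 / a - -y ^ 2 / b) - log (√a ^ 3 / √b ^ 3) := by
    rw [crossingRadius_sq hb hab.le]
    field_simp [(sub_pos.mpr hab).ne']
    ring
  rw [hexp, exp_sub, exp_sub, exp_log (by positivity)]
  unfold gaussProfile
  field_simp

theorem gaussProfile_le_of_crossingRadius_le {a b y : ℝ} (hb : 0 < b) (hab : b < a)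
    (hy : crossingRadius a b ≤ |y|) :
    gaussProfile b y ≤ gaussProfile a y := by
  rw [gaussProfile_eq_mul_exp hb hab]
  refine le_mul_of_one_le_right (gaussProfile_pos hb y).le (one_le_exp (mul_nonneg ?_ ?_))
  · exact sub_nonneg.mpr (one_div_le_one_div_of_le hb hab.le)
  · exact sub_nonneg.mpr (sq_le_sq.mpr ((abs_of_nonneg (sqrt_nonneg _)).trans_le hy))

theorem gaussProfile_lt_of_crossingRadius_lt {a b y : ℝ} (hb : 0 < b) (hab : b < a)
    (hy : crossingRadius a b < |y|) :
    gaussProfile b y < gaussProfile a y := by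
  rw [gaussProfile_eq_mul_exp hb hab]
  refine lt_mul_of_one_lt_right (gaussProfile_pos hb y) (one_lt_exp_iff.mpr (mul_pos ?_ ?_))
  · exact sub_pos.mpr (one_div_lt_one_div_of_lt hb hab)
  · exact sub_pos.mpr (sq_lt_sq.mpr ((abs_of_nonneg (sqrt_nonneg _)).trans_lt hy))

theorem gaussProfile_sub_le {a b : ℝ} (hb : 0 < b) (hab : b ≤ a) (y : ℝ) :
    gaussProfile a y - gaussProfile b y
      ≤ 2 * a * (1 / b - 1 / a) / √b ^ 3 * exp (-y ^ 2 / (2 * a)) := by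
  have ha : 0 < a := hb.trans_le hab
  have hk : 0 ≤ 1 / b - 1 / a := sub_nonneg.mpr (one_div_le_one_div_of_le hb hab)
  have hsb : 0 < √b := sqrt_pos.mpr hb
  have hprofile : gaussProfile a y ≤ exp (-y ^ 2 / a) / √b ^ 3 :=
    div_le_div_of_nonneg_left (exp_pos _).le (by positivity)
      (pow_le_pow_left₀ hsb.le (sqrt_le_sqrt hab) 3)
  have hdiff : exp (-y ^ 2 / a) - exp (-y ^ 2 / b) ≤ (1 / b - 1 / a) * (y ^ 2 * exp (-y ^ 2 / a)) := by
    have hsplit : exp (-y ^ 2 / b) = exp (-y ^ 2 / a) * exp (-((1 / b - 1 / a) * y ^ 2)) := by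
      rw [← exp_add]; ring_nf
    rw [hsplit]
    nlinarith [add_one_le_exp (-((1 / b - 1 / a) * y ^ 2)), exp_pos (-y ^ 2 / a)]
  have hpeak : y ^ 2 * exp (-y ^ 2 / a) ≤ 2 * a * exp (-y ^ 2 / (2 * a)) := by
    have hsplit : exp (-y ^ 2 / a) = exp (-(y ^ 2 / (2 * a))) * exp (-y ^ 2 / (2 * a)) := by
      rw [← exp_add]; congr 1; field_simp; ring
    calc y ^ 2 * exp (-y ^ 2 / a)
        = 2 * a * (y ^ 2 / (2 * a) * exp (-(y ^ 2 / (2 * a)))) * exp (-y ^ 2 / (2 * a)) := by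
          rw [hsplit]; field_simp
      _ ≤ 2 * a * 1 * exp (-y ^ 2 / (2 * a)) := by
          gcongr
          exact (mul_exp_neg_le_exp_neg_one _).trans (exp_le_one_iff.mpr (by norm_num))
      _ = 2 * a * exp (-y ^ 2 / (2 * a)) := by ring
  calc gaussProfile a y - gaussProfile b y
      ≤ (exp (-y ^ 2 / a) - exp (-y ^ 2 / b)) / √b ^ 3 := by
        rw [sub_div]; unfold gaussProfile at hprofile ⊢; linarith
    _ ≤ (1 / b - 1 / a) * (2 * a * exp (-y ^ 2 / (2 * a))) / √b ^ 3 := by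
        gcongr; exact hdiff.trans (by gcongr)
    _ = 2 * a * (1 / b - 1 / a) / √b ^ 3 * exp (-y ^ 2 / (2 * a)) := by ring

theorem setIntegral_gaussProfile_sub_le {a b : ℝ} (hb : 0 < b) (hab : b ≤ a) (S : Set ℝ) :
    ∫ y in S, (gaussProfile a y - gaussProfile b y)
      ≤ (√(2 * a) / √b) ^ 3 * (√π * (1 / b - 1 / a)) := by
  have ha : 0 < a := hb.trans_le hab
  have hsb : 0 < √b := sqrt_pos.mpr hb
  set K := 2 * a * (1 / b - 1 / a) / √b ^ 3
  have hK : 0 ≤ K := div_nonneg (mul_nonneg (by positivity)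
    (sub_nonneg.mpr (one_div_le_one_div_of_le hb hab))) (by positivity)
  have hmajorant : Integrable fun y => K * exp (-y ^ 2 / (2 * a)) :=
    (integrable_exp_neg_sq_div (by positivity)).const_mul K
  calc ∫ y in S, (gaussProfile a y - gaussProfile b y)
      ≤ ∫ y in S, K * exp (-y ^ 2 / (2 * a)) :=
        setIntegral_mono ((integrable_gaussProfile ha).sub (integrable_gaussProfile hb)).integrableOn
          hmajorant.integrableOn (gaussProfile_sub_le hb hab)
    _ ≤ ∫ y, K * exp (-y ^ 2 / (2 * a)) :=
        setIntegral_le_integral hmajorant (ae_of_all _ fun y => by positivity)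
    _ = K * (√π * √(2 * a)) := by rw [integral_const_mul, integral_exp_neg_sq_div]
    _ = (√(2 * a) / √b) ^ 3 * (√π * (1 / b - 1 / a)) := by
        have h2a : √(2 * a) ^ 2 = 2 * a := sq_sqrt (by positivity)
        rw [div_pow, pow_succ, h2a]
        simp only [K]
        field_simp

theorem setIntegral_gaussProfile_sub_pos {a b : ℝ} (hb : 0 < b) (hab : b < a) :
    0 < ∫ y in {y | crossingRadius a b ≤ |y|}, (gaussProfile a y - gaussProfile b y) := by
  have hS : MeasurableSet {y : ℝ | crossingRadius a b ≤ |y|} :=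
    measurableSet_le measurable_const continuous_abs.measurable
  have hnonneg : ∀ y ∈ {y : ℝ | crossingRadius a b ≤ |y|}, 0 ≤ gaussProfile a y - gaussProfile b y :=
    fun y hy => sub_nonneg.mpr (gaussProfile_le_of_crossingRadius_le hb hab hy)
  rw [setIntegral_pos_iff_support_of_nonneg_ae ((ae_restrict_iff' hS).mpr (ae_of_all _ hnonneg))
    ((integrable_gaussProfile (hb.trans hab)).sub (integrable_gaussProfile hb)).integrableOn]
  have hIoi : Ioi (crossingRadius a b) ⊆
      Function.support (fun y => gaussProfile a y - gaussProfile b y) ∩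
        {y | crossingRadius a b ≤ |y|} := by
    intro y (hy : crossingRadius a b < y)
    have hy' : crossingRadius a b < |y| := hy.trans_le (le_abs_self y)
    exact ⟨(sub_pos.mpr (gaussProfile_lt_of_crossingRadius_lt hb hab hy')).ne', hy'.le⟩
  refine lt_of_lt_of_le ?_ (measure_mono hIoi)
  simp

theorem intervalIntegral_neg_add_setIntegral_le_abs {E : Type*} [NormedAddCommGroup E]
    [NormedSpace ℝ E] {f : ℝ → E} (hf : Integrable f) {r : ℝ} (hr : 0 ≤ r) :
    (∫ y in -r..r, f y) + ∫ y in {y | r ≤ |y|}, f y = ∫ y, f y := by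
  have hS : MeasurableSet {y : ℝ | r ≤ |y|} :=
    measurableSet_le measurable_const continuous_abs.measurable
  have hcompl : {y : ℝ | r ≤ |y|}ᶜ = Ioo (-r) r := by
    ext y
    simp [abs_lt]
  rw [intervalIntegral.integral_of_le (by linarith), integral_Ioc_eq_integral_Ioo, ← hcompl,
    add_comm, integral_add_compl hS hf]

theorem sqrt_sq_mul_sq_pow_three {x y : ℝ} (hx : 0 ≤ x) (hy : 0 ≤ y) :
    √(x ^ 2 * y ^ 2) ^ 3 = x ^ 3 * y ^ 3 := by
  rw [← mul_pow, sqrt_sq (mul_nonneg hx hy), mul_pow]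

theorem ytil_eq_crossingRadius {γ₀ γ₁ : ℝ} (hγ₀ : 0 ≤ γ₀) (hγ₁ : 0 ≤ γ₁) (ν t : ℝ) :
    ytil ν γ₀ γ₁ t = crossingRadius (4 * ν * t + γ₀ ^ 2 * γ₁ ^ 2) (γ₀ ^ 2 * γ₁ ^ 2) := by
  rw [ytil, crossingRadius, sqrt_sq_mul_sq_pow_three hγ₀ hγ₁, add_sub_cancel_right]
  ring_nf

theorem h1fun_eq {γ₀ γ₁ : ℝ} (hγ₀ : 0 < γ₀) (hγ₁ : 0 < γ₁) (ν γ₂ t y : ℝ) :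
    h1fun ν γ₀ γ₁ γ₂ t y = γ₂ * γ₁ ^ 3 *
      (gaussProfile (4 * ν * t + γ₀ ^ 2 * γ₁ ^ 2) y - gaussProfile (γ₀ ^ 2 * γ₁ ^ 2) y) := by
  rw [h1fun, gaussProfile, gaussProfile, sqrt_sq_mul_sq_pow_three hγ₀.le hγ₁.le]
  field_simp

/-- inequality (2.9) (eq-neg-part) in the proof of Proposition 2.4.
For `0 < t ≤ T = ν⁻¹γ₀²γ₁²`: the integral of the negative part of `h₁` (over
`|y| ≤ ỹ(t)`) is comparable to the total integral and strictly dominates the integral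
of the positive part (over `|y| ≥ ỹ(t)`), both of the latter being positive. -/
theorem h1_negative_part_dominates :
    ∃ C : ℝ, 0 < C ∧ ∀ ν γ₀ γ₁ γ₂ t : ℝ, 0 < ν →
      γ₀ ∈ Set.Ioo (0:ℝ) 1 → γ₁ ∈ Set.Ioo (0:ℝ) 1 → 0 < γ₂ →
      0 < t → t ≤ ν⁻¹ * γ₀^2 * γ₁^2 →
      (-(∫ y in (-(ytil ν γ₀ γ₁ t))..(ytil ν γ₀ γ₁ t), h1fun ν γ₀ γ₁ γ₂ t y)
        ≤ C * (-(∫ y : ℝ, h1fun ν γ₀ γ₁ γ₂ t y))) ∧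
      ((1 + 1/C) * (∫ y in {y : ℝ | ytil ν γ₀ γ₁ t ≤ |y|}, h1fun ν γ₀ γ₁ γ₂ t y)
        ≤ -(∫ y in (-(ytil ν γ₀ γ₁ t))..(ytil ν γ₀ γ₁ t), h1fun ν γ₀ γ₁ γ₂ t y)) ∧
      0 < (∫ y in {y : ℝ | ytil ν γ₀ γ₁ t ≤ |y|}, h1fun ν γ₀ γ₁ γ₂ t y) ∧
      0 < -(∫ y in (-(ytil ν γ₀ γ₁ t))..(ytil ν γ₀ γ₁ t), h1fun ν γ₀ γ₁ γ₂ t y) := by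
  refine ⟨65, by norm_num, ?_⟩
  rintro ν γ₀ γ₁ γ₂ t hν ⟨hγ₀, -⟩ ⟨hγ₁, -⟩ hγ₂ ht hT
  have hνt : ν * t ≤ γ₀ ^ 2 * γ₁ ^ 2 := by
    rw [← le_div_iff₀' hν]; simpa [div_eq_inv_mul, mul_assoc] using hT
  simp only [ytil_eq_crossingRadius hγ₀.le hγ₁.le, h1fun_eq hγ₀ hγ₁, integral_const_mul,
    intervalIntegral.integral_const_mul]
  set a := 4 * ν * t + γ₀ ^ 2 * γ₁ ^ 2
  set b := γ₀ ^ 2 * γ₁ ^ 2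
  have hb : 0 < b := by positivity
  have hab : b < a := by simp only [a]; nlinarith [mul_pos hν ht]
  have hD : 0 < √π * (1 / b - 1 / a) :=
    mul_pos (sqrt_pos.mpr pi_pos) (sub_pos.mpr (one_div_lt_one_div_of_lt hb hab))
  -- `a ≤ 5b` gives `√(2a) ≤ √(16b) = 4√b`
  have hratio : √(2 * a) / √b ≤ 4 := by
    rw [div_le_iff₀ (sqrt_pos.mpr hb), show (4 : ℝ) = √16 by norm_num, ← sqrt_mul (by norm_num)]
    exact sqrt_le_sqrt (by simp only [a]; linarith)
  have hP := setIntegral_gaussProfile_sub_pos hb hab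
  have hPD := (setIntegral_gaussProfile_sub_le hb hab.le {y | crossingRadius a b ≤ |y|}).trans
    (mul_le_mul_of_nonneg_right (pow_le_pow_left₀ (by positivity) hratio 3) hD.le)
  have hsplit := intervalIntegral_neg_add_setIntegral_le_abs
    (f := fun y => gaussProfile a y - gaussProfile b y) (r := crossingRadius a b)
    ((integrable_gaussProfile (hb.trans hab)).sub (integrable_gaussProfile hb)) (sqrt_nonneg _)
  rw [integral_gaussProfile_sub (hb.trans hab) hb] at hsplit ⊢
  have hc : 0 < γ₂ * γ₁ ^ 3 := by positivity
  refine ⟨?_, ?_, ?_, ?_⟩ <;> nlinarith
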